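/- Let ψ(t) = t^2/(t+1). For each r ≥ 0 there exists a monic polynomial g_r(t) ∈ ℤ[t] of degree 2^r such that ψ^(r+1)(t) - ψ^(r)(t) = - t^(2^r) / g_r(t) as rational functions, with g_0(t) = t + 1. -/

import Mathlib

/-- The iterates of the rational function ψ(t) = t²/(t+1), as elements of ℚ(t):
`psiIter r` is ψ⁽ʳ⁾(t), with `psiIter 0 = t`. -/
noncomputable def psiIter : ℕ → RatFunc ℚ
  | 0 => RatFunc.X
  | r + 1 => (psiIter r) ^ 2 / (psiIter r + 1)

/-!
Write ψ⁽ʳ⁾(t) = t^(2^r) / h_r with h_0 = 1. Since ψ(a/b) = a² / (b(a + b)), the denominators satisfy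
h_{r+1} = h_r (t^(2^r) + h_r), so h_r is monic of degree 2^r - 1. As ψ(x) - x = -x/(x + 1), the
difference ψ⁽ʳ⁺¹⁾ - ψ⁽ʳ⁾ equals -t^(2^r) / g_r with g_r = t^(2^r) + h_r, monic of degree 2^r.
-/

open Polynomial

lemma Polynomial.natDegree_X_pow_add_of_natDegree_lt {R : Type*} [Semiring R] [Nontrivial R]
    {p : R[X]} {n : ℕ} (hp : p.natDegree < n) : (X ^ n + p).natDegree = n := by
  rw [natDegree_add_eq_left_of_natDegree_lt] <;> rw [natDegree_X_pow]
  exact hp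

lemma Polynomial.monic_X_pow_add_of_natDegree_lt {R : Type*} [Semiring R] [Nontrivial R]
    {p : R[X]} {n : ℕ} (hp : p.natDegree < n) : (X ^ n + p).Monic :=
  monic_X_pow_add ((degree_le_natDegree).trans_lt (by exact_mod_cast hp))

noncomputable def psiDen : ℕ → ℤ[X]
  | 0 => 1
  | r + 1 => psiDen r * (X ^ 2 ^ r + psiDen r)

lemma psiDen_monic_and_natDegree (r : ℕ) :
    (psiDen r).Monic ∧ (psiDen r).natDegree = 2 ^ r - 1 := by
  induction r with
  | zero => exact ⟨monic_one, natDegree_one⟩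
  | succ r ih =>
    obtain ⟨hmonic, hdeg⟩ := ih
    have hlt : (psiDen r).natDegree < 2 ^ r := by rw [hdeg]; exact Nat.sub_lt (by positivity) one_pos
    have hfactor := monic_X_pow_add_of_natDegree_lt hlt
    refine ⟨hmonic.mul hfactor, ?_⟩
    rw [psiDen, hmonic.natDegree_mul hfactor, hdeg, natDegree_X_pow_add_of_natDegree_lt hlt]
    have : 1 ≤ 2 ^ r := Nat.one_le_two_pow
    rw [pow_succ]
    omega

lemma psiDen_natDegree_lt (r : ℕ) : (psiDen r).natDegree < 2 ^ r := by
  rw [(psiDen_monic_and_natDegree r).2]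
  exact Nat.sub_lt (by positivity) one_pos

noncomputable def intPolyToRatFunc : ℤ[X] →+* RatFunc ℚ :=
  (algebraMap ℚ[X] (RatFunc ℚ)).comp (mapRingHom (Int.castRingHom ℚ))

@[simp]
lemma intPolyToRatFunc_X : intPolyToRatFunc X = RatFunc.X := by
  simp [intPolyToRatFunc, RatFunc.algebraMap_X]

lemma intPolyToRatFunc_injective : Function.Injective intPolyToRatFunc :=
  RatFunc.algebraMap_injective ℚ |>.comp (map_injective _ (Int.castRingHom ℚ).injective_int)

lemma Polynomial.Monic.intPolyToRatFunc_ne_zero {p : ℤ[X]} (hp : p.Monic) :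
    intPolyToRatFunc p ≠ 0 :=
  (map_ne_zero_iff _ intPolyToRatFunc_injective).2 hp.ne_zero

lemma psiIter_eq_div (r : ℕ) :
    psiIter r = RatFunc.X ^ 2 ^ r / intPolyToRatFunc (psiDen r) := by
  induction r with
  | zero => simp [psiIter, psiDen]
  | succ r ih =>
    have hden := (psiDen_monic_and_natDegree r).1.intPolyToRatFunc_ne_zero
    have hsum := (monic_X_pow_add_of_natDegree_lt (psiDen_natDegree_lt r)).intPolyToRatFunc_ne_zero
    simp only [map_add, map_pow, intPolyToRatFunc_X] at hsum
    rw [psiIter, ih, psiDen, map_mul, map_add, map_pow, intPolyToRatFunc_X]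
    field_simp
    ring

theorem psi_iterate_difference :
    ∃ g : ℕ → Polynomial ℤ, g 0 = Polynomial.X + 1 ∧
      ∀ r : ℕ, (g r).Monic ∧ (g r).natDegree = 2 ^ r ∧
        psiIter (r + 1) - psiIter r =
          - (RatFunc.X ^ (2 ^ r)) /
            algebraMap (Polynomial ℚ) (RatFunc ℚ)
              ((g r).map (Int.castRingHom ℚ)) := by
  refine ⟨fun r => X ^ 2 ^ r + psiDen r, by simp [psiDen], fun r => ?_⟩
  have hmonic := monic_X_pow_add_of_natDegree_lt (psiDen_natDegree_lt r)
  refine ⟨hmonic, natDegree_X_pow_add_of_natDegree_lt (psiDen_natDegree_lt r), ?_⟩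
  change _ = _ / intPolyToRatFunc _
  have hden := (psiDen_monic_and_natDegree r).1.intPolyToRatFunc_ne_zero
  have hsum := hmonic.intPolyToRatFunc_ne_zero
  simp only [map_add, map_pow, intPolyToRatFunc_X] at hsum ⊢
  rw [psiIter, psiIter_eq_div r]
  field_simp
  ring
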